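/- arXiv:1106.3811 — 10 statements merged into one kernel-verified Lean document; each statement's English description precedes it below -/
import Mathlib

section
/- Let G be a rectifiable space. If V is an open rectifiable subspace of G, then V is closed in G. -/
open Filter Topology

/-- An open rectifiable subspace of a rectifiable space is closed. -/
theorem stmt_2 {G : Type*} [TopologicalSpace G]
    (p q : G → G → G)
    (hp : Continuous fun z : G × G => p z.1 z.2)
    (hq : Continuous fun z : G × G => q z.1 z.2)
    (e : G)
    (hpq : ∀ x y : G, p x (q x y) = y)
    (hqp : ∀ x y : G, q x (p x y) = y)
    (hqe : ∀ x : G, q x x = e)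
    (V : Set G) (hV : IsOpen V)
    (hVp : ∀ a ∈ V, ∀ b ∈ V, p a b ∈ V)
    (hVq : ∀ a ∈ V, ∀ b ∈ V, q a b ∈ V) :
    IsClosed V := by
  apply isClosed_of_closure_subset
  intro x hx
  -- V is nonempty since x is in its closure
  have hne : V.Nonempty := by
    rcases (mem_closure_iff.mp hx Set.univ isOpen_univ (Set.mem_univ x)) with ⟨v, _, hv⟩
    exact ⟨v, hv⟩
  obtain ⟨v0, hv0⟩ := hne
  have he : e ∈ V := by
    have := hVq v0 hv0 v0 hv0
    rwa [hqe v0] at this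
  -- U = { y | q y x ∈ V } is an open neighborhood of x
  have hcont : Continuous fun y : G => q y x :=
    hq.comp (continuous_id.prodMk continuous_const)
  have hU : IsOpen {y : G | q y x ∈ V} := hV.preimage hcont
  have hxU : x ∈ {y : G | q y x ∈ V} := by
    simp only [Set.mem_setOf_eq, hqe x]
    exact he
  rcases mem_closure_iff.mp hx _ hU hxU with ⟨v, hvU, hvV⟩
  have : p v (q v x) ∈ V := hVp v hvV _ hvU
  rwa [hpq v x] at this
end

section
/- Let G be a Hausdorff rectifiable space. If H is a rectifiable subspace of G that is locally compact in the subspace topology, then H is closed in G. -/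
open Filter Topology

/-- A locally compact rectifiable subspace of a Hausdorff rectifiable
space is closed. -/
theorem stmt_3 {G : Type*} [TopologicalSpace G] [T2Space G]
    (p q : G → G → G)
    (hp : Continuous fun z : G × G => p z.1 z.2)
    (hq : Continuous fun z : G × G => q z.1 z.2)
    (e : G)
    (hpq : ∀ x y : G, p x (q x y) = y)
    (hqp : ∀ x y : G, q x (p x y) = y)
    (hqe : ∀ x : G, q x x = e)
    (H : Set G)
    (hHp : ∀ a ∈ H, ∀ b ∈ H, p a b ∈ H)
    (hHq : ∀ a ∈ H, ∀ b ∈ H, q a b ∈ H)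
    (hloc : LocallyCompactSpace H) :
    IsClosed H := by
  rw [← closure_subset_iff_isClosed]
  intro x hx
  -- H is nonempty since x ∈ closure H
  obtain ⟨h0, hh0⟩ : H.Nonempty := by
    rcases (mem_closure_iff.mp hx) Set.univ isOpen_univ (Set.mem_univ x) with ⟨y, -, hy⟩
    exact ⟨y, hy⟩
  have he : e ∈ H := hqe h0 ▸ hHq h0 hh0 h0 hh0
  -- Local compactness at e: get an open U ∋ e with U ∩ closure H ⊆ H
  obtain ⟨C, hCc, hCn⟩ := exists_compact_mem_nhds (⟨e, he⟩ : H)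
  have hC'c : IsCompact (Subtype.val '' C : Set G) := hCc.image continuous_subtype_val
  have hC'H : (Subtype.val '' C : Set G) ⊆ H := by
    rintro _ ⟨⟨a, ha⟩, -, rfl⟩; exact ha
  rw [nhds_subtype_eq_comap, Filter.mem_comap] at hCn
  obtain ⟨U, hU, hUC⟩ := hCn
  obtain ⟨V, hVU, hVopen, heV⟩ := mem_nhds_iff.mp hU
  have hVH : V ∩ closure H ⊆ H := by
    have h1 : V ∩ H ⊆ Subtype.val '' C := by
      rintro y ⟨hyV, hyH⟩
      exact ⟨⟨y, hyH⟩, hUC (hVU hyV), rfl⟩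
    calc V ∩ closure H ⊆ closure (V ∩ H) := hVopen.inter_closure
      _ ⊆ closure (Subtype.val '' C) := closure_mono h1
      _ = Subtype.val '' C := hC'c.isClosed.closure_eq
      _ ⊆ H := hC'H
  -- q maps H × closure H into closure H (fixing first coordinate in H)
  have hqK : ∀ a ∈ H, q a x ∈ closure H := by
    intro a ha
    have : Set.MapsTo (q a) H H := fun b hb => hHq a ha b hb
    exact this.closure (hq.comp (continuous_const.prodMk continuous_id)) hx
  -- the map y ↦ q y x is continuous and sends x to e ∈ V
  have hg : Continuous fun y : G => q y x :=
    hq.comp (continuous_id.prodMk continuous_const)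
  have hgx : (fun y : G => q y x) x ∈ V := by simpa [hqe] using heV
  have hW : IsOpen ((fun y : G => q y x) ⁻¹' V) := hVopen.preimage hg
  rcases mem_closure_iff.mp hx _ hW hgx with ⟨h, hhW, hhH⟩
  have : q h x ∈ H := hVH ⟨hhW, hqK h hhH⟩
  have := hHp h hhH _ this
  rwa [hpq] at this
end

section
/- Let G be a Hausdorff locally compact rectifiable space satisfying the Souslin property (every pairwise disjoint family of nonempty open sets is countable) that is also separable. Then G is σ-compact. -/
open Filter Topology

/-- A Hausdorff locally compact rectifiable space with the Souslin
property which is separable is σ-compact. -/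
theorem stmt_4 {G : Type*} [TopologicalSpace G] [T2Space G] [LocallyCompactSpace G]
    (p q : G → G → G)
    (hp : Continuous fun z : G × G => p z.1 z.2)
    (hq : Continuous fun z : G × G => q z.1 z.2)
    (e : G)
    (hpq : ∀ x y : G, p x (q x y) = y)
    (hqp : ∀ x y : G, q x (p x y) = y)
    (hqe : ∀ x : G, q x x = e)
    (hSouslin : ∀ 𝒰 : Set (Set G), (∀ U ∈ 𝒰, IsOpen U ∧ U.Nonempty) →
      𝒰.Pairwise Disjoint → 𝒰.Countable)
    (hsep : TopologicalSpace.SeparableSpace G) :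
    SigmaCompactSpace G := by
  rcases isEmpty_or_nonempty G with hG | hG
  · exact ⟨⟨fun _ => ∅, fun _ => isCompact_empty, by
      simp [Set.eq_empty_of_isEmpty (Set.univ : Set G)]⟩⟩
  obtain ⟨u, hu⟩ := TopologicalSpace.exists_dense_seq G
  obtain ⟨K, hK, hKe⟩ := exists_compact_mem_nhds e
  refine ⟨⟨fun n => p (u n) '' K, fun n => hK.image ?_, ?_⟩⟩
  · exact hp.comp (Continuous.prodMk_right (u n))
  · refine Set.eq_univ_of_forall fun x => ?_
    have hcont : Continuous fun y => q y x :=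
      hq.comp (continuous_id.prodMk continuous_const)
    have hV : IsOpen {y | q y x ∈ interior K} := isOpen_interior.preimage hcont
    have hxV : x ∈ {y | q y x ∈ interior K} := by
      simp only [Set.mem_setOf_eq, hqe]
      exact mem_interior_iff_mem_nhds.mpr hKe
    obtain ⟨n, hn⟩ := hu.exists_mem_open hV ⟨x, hxV⟩
    exact Set.mem_iUnion.mpr ⟨n, ⟨q (u n) x, interior_subset hn, hpq _ _⟩⟩
end

section
/- Let G be a Hausdorff rectifiable space that is locally compact and separable. Then G is σ-compact, and hence Lindelöf. -/
open Filter Topology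

/-- A Hausdorff, locally compact, separable rectifiable space is
σ-compact, and hence Lindelöf. -/
theorem stmt_5 {G : Type*} [TopologicalSpace G] [T2Space G] [LocallyCompactSpace G]
    [TopologicalSpace.SeparableSpace G]
    (p q : G → G → G)
    (hp : Continuous fun z : G × G => p z.1 z.2)
    (hq : Continuous fun z : G × G => q z.1 z.2)
    (e : G)
    (hpq : ∀ x y : G, p x (q x y) = y)
    (hqp : ∀ x y : G, q x (p x y) = y)
    (hqe : ∀ x : G, q x x = e) :
    SigmaCompactSpace G ∧ LindelofSpace G := by
  have : Nonempty G := ⟨e⟩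
  obtain ⟨K, hK, hKe⟩ := exists_compact_mem_nhds e
  obtain ⟨D, hDc, hDd⟩ := TopologicalSpace.exists_countable_dense G
  have hDne : D.Nonempty := hDd.nonempty
  obtain ⟨f, hf⟩ := hDc.exists_surjective hDne
  have hsc : SigmaCompactSpace G := by
    refine ⟨⟨fun n => (fun y => p (f n : G) y) '' K, fun n => ?_, ?_⟩⟩
    · exact hK.image (hp.comp (Continuous.prodMk_right _))
    · ext x
      simp only [Set.mem_iUnion, Set.mem_univ, iff_true]
      -- the set of d with q d x ∈ interior K is open and contains x
      have hopen : IsOpen {d : G | q d x ∈ interior K} :=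
        (hq.comp (continuous_id.prodMk continuous_const)).isOpen_preimage _ isOpen_interior
      have hxmem : x ∈ {d : G | q d x ∈ interior K} := by
        simpa [hqe x] using mem_interior_iff_mem_nhds.2 hKe
      obtain ⟨d, hdD, hdU⟩ := hDd.exists_mem_open hopen ⟨x, hxmem⟩
      obtain ⟨n, hn⟩ := hf ⟨d, hdD⟩
      refine ⟨n, q d x, interior_subset hdU, ?_⟩
      rw [hn]
      exact hpq d x
  exact ⟨hsc, inferInstance⟩
end

section
/- Let X be a topological space, F a compact subset of X with a countable neighborhood base {U_n : n ∈ ℕ} in X satisfying closure(U_{n+1}) ⊆ U_n, and let H = ⋂_n V_n be a compact subset of F where each V_n is open in F and V_{n+1} ⊆ V_n. Suppose W_n is open in X with V_n = W_n ∩ F, W_n ⊆ U_n, and closure(W_{n+1}) ⊆ W_n for each n. Then {W_n : n ∈ ℕ} is a neighborhood base at H in X, i.e., for every open U ⊇ H there exists n with W_n ⊆ U. -/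
open Filter Topology

/-- If a compact set `F` has a countable decreasing neighborhood base
`U n` in `X`, `H = ⋂ n, V n` is a compact subset of `F` with `V n` open in `F` and
decreasing, and `W n` are open sets in `X` with `V n = W n ∩ F`, `W n ⊆ U n`,
`closure (W (n+1)) ⊆ W n`, then `{W n}` is a neighborhood base at `H` in `X`. -/
theorem stmt_6 {X : Type*} [TopologicalSpace X]
    (F : Set X) (hF : IsCompact F)
    (U : ℕ → Set X)
    (hUopen : ∀ n, IsOpen (U n)) (hUF : ∀ n, F ⊆ U n)
    (hUdec : ∀ n, closure (U (n + 1)) ⊆ U n)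
    (hUbase : ∀ O : Set X, IsOpen O → F ⊆ O → ∃ n, U n ⊆ O)
    (V : ℕ → Set X)
    (hVopen : ∀ n, ∃ O : Set X, IsOpen O ∧ V n = O ∩ F)
    (hVdec : ∀ n, V (n + 1) ⊆ V n)
    (hVF : ∀ n, V n ⊆ F)
    (hH : IsCompact (⋂ n, V n))
    (W : ℕ → Set X)
    (hWopen : ∀ n, IsOpen (W n))
    (hWV : ∀ n, V n = W n ∩ F)
    (hWU : ∀ n, W n ⊆ U n)
    (hWdec : ∀ n, closure (W (n + 1)) ⊆ W n) :
    ∀ O : Set X, IsOpen O → (⋂ n, V n) ⊆ O → ∃ n, W n ⊆ O := by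
  intro O hO hHO
  have hWanti : Antitone W := antitone_nat_of_succ_le fun n =>
    (subset_closure).trans (hWdec n)
  have hUanti : Antitone U := antitone_nat_of_succ_le fun n =>
    (subset_closure).trans (hUdec n)
  -- the directed open cover of F
  set c : ℕ → Set X := fun n => O ∪ (closure (W (n + 1)))ᶜ with hc
  have hcopen : ∀ n, IsOpen (c n) := fun n => hO.union isClosed_closure.isOpen_compl
  have hcmono : Monotone c := by
    intro a b hab
    exact Set.union_subset_union_right _ (Set.compl_subset_compl.2
      (closure_mono (hWanti (Nat.succ_le_succ hab))))
  have hcover : F ⊆ ⋃ n, c n := by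
    intro x hx
    by_contra hxn
    simp only [Set.mem_iUnion, not_exists, hc, Set.mem_union, Set.mem_compl_iff,
      not_or, not_not] at hxn
    have hxV : ∀ n, x ∈ V n := by
      intro n
      rw [hWV n]
      exact ⟨(hWdec n) (hxn n).2, hx⟩
    exact (hxn 0).1 (hHO (Set.mem_iInter.2 hxV))
  obtain ⟨n, hn⟩ := hF.elim_directed_cover c hcopen hcover (hcmono.directed_le)
  obtain ⟨m, hm⟩ := hUbase (c n) (hcopen n) hn
  refine ⟨max m (n + 1), fun x hx => ?_⟩
  have hx1 : x ∈ c n := hm (hWU _ (hWanti (le_max_left m (n + 1)) hx))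
  have hx2 : x ∈ closure (W (n + 1)) :=
    subset_closure (hWanti (le_max_right m (n + 1)) hx)
  rcases hx1 with h | h
  · exact h
  · exact absurd hx2 h
end

section
/- Every Fréchet–Urysohn Hausdorff rectifiable space G is an α₄-space: for any point x ∈ G and any countable family {S_n : n ∈ ℕ} of sequences each converging to x, there is a sequence S converging to x that intersects S_n for infinitely many n. -/
/-!
Fix a sequence `c n → x` avoiding `x` (one of the `S n` is such, unless `x` itself lies on
infinitely many of them). The homeomorphisms `T n y = p (c n) (q x y)` send `x` to `c n`, so
`c n`, and hence `x`, lies in the closure of `A = ⋃ n, T n '' range (S n)`; Fréchet–Urysohn gives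
`a i = T (n i) (S (n i) (m i)) → x`. The compact set `T n '' insert x (range (S n))` misses `x`
unless `S n` contains `t n = p x (q (c n) x)`; if infinitely many `S n` do, `t → x` is the
required sequence. Otherwise `a` meets each piece only finitely often, so `n i → ∞`, and undoing
the translations, `S (n i) (m i) = p x (q (c (n i)) (a i)) → p x (q x x) = x`.
-/

open Filter Topology Set

structure IsRectification {G : Type*} [TopologicalSpace G] (p q : G → G → G) (e : G) :
    Prop where
  continuous_p : Continuous fun z : G × G => p z.1 z.2
  continuous_q : Continuous fun z : G × G => q z.1 z.2
  p_q : ∀ x y, p x (q x y) = y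
  q_p : ∀ x y, q x (p x y) = y
  q_self : ∀ x, q x x = e

theorem tendsto_atTop_of_mem_isClosed {X ι : Type*} [TopologicalSpace X] {K : ℕ → Set X}
    (hK : ∀ k, IsClosed (K k)) {x : X} {l : Filter ι} {a : ι → X} {n : ι → ℕ}
    (ha : Tendsto a l (𝓝 x)) (han : ∀ i, a i ∈ K (n i)) (hx : ∀ i, x ∉ K (n i)) :
    Tendsto n l atTop := by
  refine tendsto_atTop.2 fun M => ?_
  set F := ⋃ k ∈ {k | k < M ∧ x ∉ K k}, K k
  have hF : IsClosed F :=
    ((finite_lt_nat M).subset fun k hk => hk.1).isClosed_biUnion fun k _ => hK k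
  have hxF : x ∉ F := by
    simp only [F, mem_iUnion, not_exists]
    exact fun k hk hxk => hk.2 hxk
  filter_upwards [ha (hF.isOpen_compl.mem_nhds hxF)] with i hi
  by_contra hlt
  exact hi (mem_biUnion ⟨not_le.1 hlt, hx i⟩ (han i))

namespace IsRectification

variable {G : Type*} [TopologicalSpace G] {p q : G → G → G} {e : G}

theorem p_e (h : IsRectification p q e) (a : G) : p a e = a := by
  rw [← h.q_self a, h.p_q]

theorem continuous_p_left (h : IsRectification p q e) (a : G) : Continuous (p a) :=
  h.continuous_p.comp (continuous_const.prodMk continuous_id)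

theorem tendsto_p_q {ι : Type*} (h : IsRectification p q e) {l : Filter ι} {u v : ι → G}
    {x : G} (hu : Tendsto u l (𝓝 x)) (hv : Tendsto v l (𝓝 x)) :
    Tendsto (fun i => p x (q (u i) (v i))) l (𝓝 x) := by
  have hq : Tendsto (fun i => q (u i) (v i)) l (𝓝 e) :=
    h.q_self x ▸ (h.continuous_q.tendsto (x, x)).comp (hu.prodMk_nhds hv)
  exact (h.p_e x ▸ (h.continuous_p_left x).tendsto e).comp hq

theorem eq_of_p_q_eq (h : IsRectification p q e) {x c : G} (hx : p x (q c x) = x) : c = x := by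
  have hqe : q c x = e := by rw [← h.q_p x (q c x), hx, h.q_self]
  rw [← h.p_q c x, hqe, h.p_e]

theorem eq_p_q_of_p_q_eq (h : IsRectification p q e) {x c y : G} (hy : p c (q x y) = x) :
    y = p x (q c x) :=
  (by rw [h.q_p, h.p_q] : y = p x (q c (p c (q x y)))).trans (by rw [hy])

theorem exists_tendsto_meets [T2Space G] [FrechetUrysohnSpace G] (h : IsRectification p q e)
    {x : G} {c : ℕ → G} (hc : Tendsto c atTop (𝓝 x)) (hcx : ∀ n, c n ≠ x)
    {S : ℕ → ℕ → G} (hS : ∀ n, Tendsto (S n) atTop (𝓝 x)) :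
    ∃ s : ℕ → G, Tendsto s atTop (𝓝 x) ∧ {n : ℕ | ∃ k m : ℕ, s k = S n m}.Infinite := by
  set t : ℕ → G := fun n => p x (q (c n) x)
  by_cases ht : {n | t n ∈ range (S n)}.Infinite
  · refine ⟨t, h.tendsto_p_q hc tendsto_const_nhds, ht.mono ?_⟩
    rintro n ⟨m, hm⟩
    exact ⟨n, m, hm.symm⟩
  obtain ⟨N, hN⟩ := (not_infinite.1 ht).bddAbove
  set T : ℕ → G → G := fun n y => p (c n) (q x y)
  have hT : ∀ n, Continuous (T n) := fun n =>
    (h.continuous_p_left _).comp (h.continuous_q.comp (continuous_const.prodMk continuous_id))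
  have hTx : ∀ n, T n x = c n := fun n => by simp only [T, h.q_self, h.p_e]
  have hx_notMem : ∀ n, N < n → x ∉ T n '' insert x (range (S n)) := by
    rintro n hNn ⟨y, hy, hyx⟩
    have hyt : y = t n := h.eq_p_q_of_p_q_eq hyx
    rcases hy with rfl | hyS
    · exact hcx n (h.eq_of_p_q_eq hyt.symm)
    · exact absurd (hN (hyt ▸ hyS : t n ∈ range (S n))) (not_le.2 hNn)
  set A := ⋃ n ∈ Ioi N, T n '' range (S n)
  have hcA : ∀ n, N < n → c n ∈ closure A := fun n hNn =>
    hTx n ▸ mem_closure_of_tendsto ((hT n).continuousAt.tendsto.comp (hS n))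
      (Eventually.of_forall fun m => mem_biUnion hNn (mem_image_of_mem _ (mem_range_self m)))
  have hxA : x ∈ closure A := closure_closure (s := A) ▸
    mem_closure_of_tendsto hc (eventually_atTop.2 ⟨N + 1, hcA⟩)
  obtain ⟨a, haA, ha⟩ := mem_closure_iff_seq_limit.1 hxA
  simp only [A, mem_iUnion, mem_Ioi, mem_image, mem_range, exists_prop, exists_exists_eq_and]
    at haA
  choose n hNn m hm using haA
  have hn : Tendsto n atTop atTop :=
    tendsto_atTop_of_mem_isClosed
      (fun n => ((hS n).isCompact_insert_range.image (hT n)).isClosed) ha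
      (fun i => ⟨_, mem_insert_of_mem _ (mem_range_self _), hm i⟩) fun i => hx_notMem _ (hNn i)
  refine ⟨fun i => S (n i) (m i), ?_, ?_⟩
  · have hs : ∀ i, S (n i) (m i) = p x (q (c (n i)) (a i)) := fun i => by
      rw [← hm i, h.q_p, h.p_q]
    simpa only [hs] using h.tendsto_p_q (u := fun i => c (n i)) (hc.comp hn) ha
  · refine (infinite_of_not_bddAbove (not_bddAbove_of_tendsto_atTop hn)).mono ?_
    rintro _ ⟨i, rfl⟩
    exact ⟨i, m i, rfl⟩

end IsRectification

/-- Every Fréchet–Urysohn Hausdorff rectifiable space is an α₄-space: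
for each point `x` and each countable family of sequences converging to `x` there
is a sequence converging to `x` that meets infinitely many of them. -/
theorem stmt_9 {G : Type*} [TopologicalSpace G] [T2Space G] [FrechetUrysohnSpace G]
    (p q : G → G → G)
    (hp : Continuous fun z : G × G => p z.1 z.2)
    (hq : Continuous fun z : G × G => q z.1 z.2)
    (e : G)
    (hpq : ∀ x y : G, p x (q x y) = y)
    (hqp : ∀ x y : G, q x (p x y) = y)
    (hqe : ∀ x : G, q x x = e) :
    ∀ x : G, ∀ S : ℕ → ℕ → G, (∀ n, Tendsto (S n) atTop (𝓝 x)) →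
      ∃ s : ℕ → G, Tendsto s atTop (𝓝 x) ∧
        {n : ℕ | ∃ k m : ℕ, s k = S n m}.Infinite := by
  intro x S hS
  by_cases hx : {n | ∃ m, S n m = x}.Infinite
  · refine ⟨fun _ => x, tendsto_const_nhds, hx.mono ?_⟩
    rintro n ⟨m, hm⟩
    exact ⟨0, m, hm.symm⟩
  obtain ⟨n₀, hn₀⟩ := (not_infinite.1 hx).exists_notMem
  exact IsRectification.exists_tendsto_meets ⟨hp, hq, hpq, hqp, hqe⟩ (hS n₀)
    (fun m hm => hn₀ ⟨m, hm⟩) hS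
end

section
/- Let G be a Hausdorff rectifiable space. If G is a sequential α₄-space, then G is Fréchet–Urysohn. -/
/-!
For `a b : G` the map `z ↦ p b (q a z)` is a homeomorphism sending `a` to `b`, jointly
continuous in `(b, z)`. Let `y n → x` with `y n` in the sequential closure of `A`, let `T n` be
the translation from `x` to `y n`, and suppose `x` is not in the sequential closure of `A`.
Call `c` heavy if `T n c ∈ A` for infinitely many `n`; a diagonal argument shows that no
sequence of heavy points converges to `x`, so each `y n` is the limit of points `S n m ∈ A`
outside `T n '' heavy`. The α₄-property applied to the sequences `(T n)⁻¹ (S n m) → x`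
yields `s → x` with `s (k n) = (T n)⁻¹ (S n (m n))` for infinitely many `n`. An index `k₀`
hit for infinitely many `n` would make `s k₀` heavy, so `k n → ∞` and
`S n (m n) = T n (s (k n)) → x`: a contradiction. Hence sequential closures are sequentially
closed, which in a sequential space means Fréchet–Urysohn.
-/

open Filter Topology

section Sequences

variable {X : Type*} [TopologicalSpace X]

def IsAlpha4At (x : X) : Prop :=
  ∀ S : ℕ → ℕ → X, (∀ n, Tendsto (S n) atTop (𝓝 x)) →
    ∃ s : ℕ → X, Tendsto s atTop (𝓝 x) ∧ {n : ℕ | ∃ k m : ℕ, s k = S n m}.Infinite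

theorem mem_seqClosure_of_tendsto {ι : Type*} {l : Filter ι} [l.NeBot] [l.IsCountablyGenerated]
    {f : ι → X} {A : Set X} {x : X} (hf : Tendsto f l (𝓝 x)) (hA : ∀ᶠ i in l, f i ∈ A) :
    x ∈ seqClosure A := by
  obtain ⟨u, hu⟩ := l.exists_seq_tendsto
  obtain ⟨t₀, ht₀⟩ := eventually_atTop.1 (hu.eventually hA)
  exact ⟨fun t => f (u (t + t₀)), fun t => ht₀ _ le_add_self,
    (hf.comp hu).comp (tendsto_add_atTop_nat t₀)⟩

theorem mem_seqClosure_diff {A B : Set X} {x : X} (hA : x ∈ seqClosure A)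
    (hB : x ∉ seqClosure B) : x ∈ seqClosure (A \ B) := by
  obtain ⟨v, hvA, hv⟩ := hA
  have hvB : ∀ᶠ i in atTop, v i ∉ B := by
    refine not_frequently.1 fun hfreq => hB ?_
    obtain ⟨φ, hφ, hφB⟩ := extraction_of_frequently_atTop hfreq
    exact ⟨v ∘ φ, hφB, hv.comp hφ.tendsto_atTop⟩
  exact mem_seqClosure_of_tendsto hv (hvB.mono fun i hi => ⟨hvA i, hi⟩)

theorem Homeomorph.mem_seqClosure_of_apply_mem_seqClosure_image (T : X ≃ₜ X) {H : Set X}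
    {x : X} (hx : T x ∈ seqClosure (T '' H)) : x ∈ seqClosure H := by
  obtain ⟨w, hwH, hw⟩ := hx
  refine ⟨T.symm ∘ w, fun i => ?_, by simpa using (T.symm.continuous.tendsto _).comp hw⟩
  obtain ⟨c, hc, hcw⟩ := hwH i
  simpa [← hcw] using hc

theorem Nat.tendsto_atTop_of_eventually_ne {ι : Type*} {l : Filter ι} {k : ι → ℕ}
    (hk : ∀ k₀, ∀ᶠ i in l, k i ≠ k₀) : Tendsto k l atTop :=
  Nat.cofinite_eq_atTop ▸ le_cofinite_iff_eventually_ne.2 hk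

variable {A : Set X} {x : X}

theorem mem_seqClosure_of_mem_seqClosure_frequently {T : ℕ → X → X}
    (hT : Tendsto (fun nz : ℕ × X => T nz.1 nz.2) (atTop ×ˢ 𝓝 x) (𝓝 x))
    (hx : x ∈ seqClosure {c | ∃ᶠ n in atTop, T n c ∈ A}) : x ∈ seqClosure A := by
  obtain ⟨c, hcA, hc⟩ := hx
  obtain ⟨φ, hφ, hφA⟩ := extraction_forall_of_frequently hcA
  exact ⟨fun t => T (φ t) (c t), hφA, hT.comp (hφ.tendsto_atTop.prodMk hc)⟩

theorem mem_seqClosure_of_isAlpha4At (hx : IsAlpha4At x) (T : ℕ → X ≃ₜ X)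
    (hT : Tendsto (fun nz : ℕ × X => T nz.1 nz.2) (atTop ×ˢ 𝓝 x) (𝓝 x))
    (hTA : ∀ n, T n x ∈ seqClosure A) : x ∈ seqClosure A := by
  by_contra hxA
  set H : Set X := {c | ∃ᶠ n in atTop, T n c ∈ A}
  have hS : ∀ n, ∃ S : ℕ → X, (∀ m, S m ∈ A \ T n '' H) ∧
      Tendsto S atTop (𝓝 (T n x)) :=
    fun n => mem_seqClosure_diff (hTA n) fun h => hxA <|
      mem_seqClosure_of_mem_seqClosure_frequently hT
        ((T n).mem_seqClosure_of_apply_mem_seqClosure_image h)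
  choose S hSA hS using hS
  obtain ⟨s, hs, hN⟩ := hx (fun n m => (T n).symm (S n m)) fun n => by
    simpa [Function.comp_def] using ((T n).symm.continuous.tendsto _).comp (hS n)
  set N : Set ℕ := {n | ∃ k m, s k = (T n).symm (S n m)}
  choose! k m hkm using fun n (hn : n ∈ N) => hn
  have hTs : ∀ n ∈ N, T n (s (k n)) = S n (m n) := fun n hn => by
    rw [hkm n hn, Homeomorph.apply_symm_apply]
  have : (atTop ⊓ 𝓟 N).NeBot :=
    frequently_iff_neBot.1 (Nat.frequently_atTop_iff_infinite.2 hN)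
  have hk : Tendsto k (atTop ⊓ 𝓟 N) atTop := by
    refine Nat.tendsto_atTop_of_eventually_ne fun k₀ => not_frequently.1 fun hfreq => ?_
    rw [frequently_inf_principal] at hfreq
    have hH : s k₀ ∈ H := hfreq.mono fun n ⟨hn, hkn⟩ => hkn ▸ hTs n hn ▸ (hSA n (m n)).1
    obtain ⟨n, hn, hkn⟩ := hfreq.exists
    exact (hSA n (m n)).2 ⟨s k₀, hH, hkn ▸ hTs n hn⟩
  refine hxA <| mem_seqClosure_of_tendsto
    (hT.comp ((tendsto_inf_left tendsto_id).prodMk (hs.comp hk))) ?_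
  exact eventually_inf_principal.2 <| Eventually.of_forall fun n hn =>
    show T n (s (k n)) ∈ A from hTs n hn ▸ (hSA n (m n)).1

end Sequences

theorem FrechetUrysohnSpace.of_isSeqClosed_seqClosure {X : Type*} [TopologicalSpace X]
    [SequentialSpace X] (h : ∀ A : Set X, IsSeqClosed (seqClosure A)) :
    FrechetUrysohnSpace X :=
  ⟨fun A => closure_minimal subset_seqClosure (h A).isClosed⟩

structure IsRectification_s10 {G : Type*} [TopologicalSpace G] (p q : G → G → G) (e : G) :
    Prop where
  continuous_p : Continuous fun z : G × G => p z.1 z.2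
  continuous_q : Continuous fun z : G × G => q z.1 z.2
  p_q : ∀ x y, p x (q x y) = y
  q_p : ∀ x y, q x (p x y) = y
  q_self : ∀ x, q x x = e

namespace IsRectification_s10

variable {G : Type*} [TopologicalSpace G] {p q : G → G → G} {e : G}

theorem continuous_translate (h : IsRectification_s10 p q e) (a : G) :
    Continuous fun w : G × G => p w.1 (q a w.2) :=
  h.continuous_p.comp <|
    continuous_fst.prodMk (h.continuous_q.comp (continuous_const.prodMk continuous_snd))

def translate (h : IsRectification_s10 p q e) (a b : G) : G ≃ₜ G where
  toFun z := p b (q a z)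
  invFun z := p a (q b z)
  left_inv z := by simp only [h.q_p, h.p_q]
  right_inv z := by simp only [h.q_p, h.p_q]
  continuous_toFun := (h.continuous_translate a).comp (continuous_const.prodMk continuous_id)
  continuous_invFun := (h.continuous_translate b).comp (continuous_const.prodMk continuous_id)

theorem translate_apply_self (h : IsRectification_s10 p q e) (a b : G) : h.translate a b a = b := by
  show p b (q a a) = b
  rw [h.q_self, ← h.q_self b, h.p_q]

theorem tendsto_translate (h : IsRectification_s10 p q e) {x : G} {y : ℕ → G}
    (hy : Tendsto y atTop (𝓝 x)) :
    Tendsto (fun nz : ℕ × G => h.translate x (y nz.1) nz.2) (atTop ×ˢ 𝓝 x) (𝓝 x) := by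
  have hc := (h.continuous_translate x).tendsto (x, x)
  rw [nhds_prod_eq, h.p_q] at hc
  exact hc.comp (hy.prodMap tendsto_id)

theorem isSeqClosed_seqClosure (h : IsRectification_s10 p q e) (hG : ∀ x : G, IsAlpha4At x)
    (A : Set G) : IsSeqClosed (seqClosure A) := fun y x hy hyx =>
  mem_seqClosure_of_isAlpha4At (hG x) (fun n => h.translate x (y n)) (h.tendsto_translate hyx)
    fun n => by simpa only [h.translate_apply_self] using hy n

end IsRectification_s10

theorem stmt_10_general {G : Type*} [TopologicalSpace G] [SequentialSpace G]
    (p q : G → G → G)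
    (hp : Continuous fun z : G × G => p z.1 z.2)
    (hq : Continuous fun z : G × G => q z.1 z.2)
    (e : G)
    (hpq : ∀ x y : G, p x (q x y) = y)
    (hqp : ∀ x y : G, q x (p x y) = y)
    (hqe : ∀ x : G, q x x = e)
    (halpha4 : ∀ x : G, ∀ S : ℕ → ℕ → G, (∀ n, Tendsto (S n) atTop (𝓝 x)) →
      ∃ s : ℕ → G, Tendsto s atTop (𝓝 x) ∧
        {n : ℕ | ∃ k m : ℕ, s k = S n m}.Infinite) :
    FrechetUrysohnSpace G :=
  .of_isSeqClosed_seqClosure <|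
    IsRectification_s10.isSeqClosed_seqClosure ⟨hp, hq, hpq, hqp, hqe⟩ halpha4

/-- A Hausdorff sequential rectifiable space with the α₄-property is
Fréchet–Urysohn. -/
theorem stmt_10 {G : Type*} [TopologicalSpace G] [T2Space G] [SequentialSpace G]
    (p q : G → G → G)
    (hp : Continuous fun z : G × G => p z.1 z.2)
    (hq : Continuous fun z : G × G => q z.1 z.2)
    (e : G)
    (hpq : ∀ x y : G, p x (q x y) = y)
    (hqp : ∀ x y : G, q x (p x y) = y)
    (hqe : ∀ x : G, q x x = e)
    (halpha4 : ∀ x : G, ∀ S : ℕ → ℕ → G, (∀ n, Tendsto (S n) atTop (𝓝 x)) →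
      ∃ s : ℕ → G, Tendsto s atTop (𝓝 x) ∧
        {n : ℕ | ∃ k m : ℕ, s k = S n m}.Infinite) :
    FrechetUrysohnSpace G :=
  stmt_10_general p q hp hq e hpq hqp hqe halpha4
end

section
/- Let G be a rectifiable space in which the right neutral element e is a Gδ-point (i.e., {e} is a countable intersection of open sets). Then G has a regular Gδ-diagonal: the diagonal Δ = {(x, x) : x ∈ G} in G × G can be written as the intersection of the closures of countably many open neighborhoods of Δ in G × G. -/
open Filter Topology

/-- A rectifiable space (given by a rectification `φ`) in which `e`
is a Gδ-point has a regular Gδ-diagonal. -/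
theorem stmt_12 {G : Type*} [TopologicalSpace G]
    (φ : G × G ≃ₜ G × G) (e : G)
    (hπ : ∀ z : G × G, (φ z).1 = z.1)
    (hdiag : ∀ x : G, φ (x, x) = (x, e))
    (hGdelta : ∃ U : ℕ → Set G, (∀ n, IsOpen (U n) ∧ e ∈ U n) ∧ {e} = ⋂ n, U n) :
    ∃ O : ℕ → Set (G × G),
      (∀ n, IsOpen (O n) ∧ ∀ x : G, (x, x) ∈ O n) ∧
      {z : G × G | z.1 = z.2} = ⋂ n, closure (O n) := by
  obtain ⟨U, hU, hUe⟩ := hGdelta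
  -- the "multiplication" coming from the inverse of the rectification
  set p : G × G → G := fun z => (φ.symm z).2 with hp
  have hpc : Continuous p := continuous_snd.comp φ.symm.continuous
  have hpe : p (e, e) = e := by
    have h : φ (e, e) = (e, e) := hdiag e
    have h2 := congrArg φ.symm h
    simp only [Homeomorph.symm_apply_apply] at h2
    show (φ.symm (e, e)).2 = e
    rw [← h2]
  -- key: e has open neighborhoods with closure inside any given open nbhd of e
  have key : ∀ n, ∃ V : Set G, IsOpen V ∧ e ∈ V ∧ closure V ⊆ U n := by
    intro n
    have hP : IsOpen (p ⁻¹' U n) := (hU n).1.preimage hpc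
    have hmem : (e, e) ∈ p ⁻¹' U n := by
      simp only [Set.mem_preimage, hpe]; exact (hU n).2
    rw [isOpen_prod_iff] at hP
    obtain ⟨V1, V2, h1, h2, he1, he2, hsub⟩ := hP e e hmem
    refine ⟨V1 ∩ V2, h1.inter h2, ⟨he1, he2⟩, ?_⟩
    intro x hx
    have hNopen : IsOpen ((fun y => (φ (y, x)).2) ⁻¹' V2) :=
      h2.preimage (continuous_snd.comp
        (φ.continuous.comp (continuous_id.prodMk continuous_const)))
    have hxN : x ∈ (fun y => (φ (y, x)).2) ⁻¹' V2 := by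
      simp only [Set.mem_preimage, hdiag x]; exact he2
    obtain ⟨v, hvN, hv1, hv2⟩ :=
      (mem_closure_iff.mp hx) _ hNopen hxN
    -- v ∈ V1, (φ (v,x)).2 ∈ V2, so p (v, (φ (v,x)).2) = x lies in U n
    have hφvx : φ (v, x) = (v, (φ (v, x)).2) := by
      have := hπ (v, x); exact Prod.ext this rfl
    have hmem2 : (v, (φ (v, x)).2) ∈ V1 ×ˢ V2 := ⟨hv1, hvN⟩
    have := hsub hmem2
    simp only [Set.mem_preimage, hp] at this
    rwa [← hφvx, Homeomorph.symm_apply_apply] at this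
  choose V hVopen hVe hVsub using key
  refine ⟨fun n => φ ⁻¹' (Set.univ ×ˢ V n), fun n => ⟨?_, fun x => ?_⟩, ?_⟩
  · exact (isOpen_univ.prod (hVopen n)).preimage φ.continuous
  · simp only [Set.mem_preimage, hdiag x, Set.mem_prod]
    exact ⟨Set.mem_univ _, hVe n⟩
  · have hclO : ∀ n, closure (φ ⁻¹' (Set.univ ×ˢ V n))
        = φ ⁻¹' (Set.univ ×ˢ closure (V n)) := by
      intro n
      rw [← φ.preimage_closure, closure_prod_eq, closure_univ]
    ext z
    simp only [Set.mem_setOf_eq, Set.mem_iInter]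
    constructor
    · rintro h n
      refine subset_closure ?_
      simp only [Set.mem_preimage, Set.mem_prod, Set.mem_univ, true_and]
      have hz : z = (z.1, z.1) := Prod.ext rfl h.symm
      rw [hz, hdiag]
      exact hVe n
    · intro h
      have h2 : ∀ n, (φ z).2 ∈ U n := by
        intro n
        have := h n
        rw [hclO n] at this
        exact hVsub n this.2
      have : (φ z).2 ∈ ⋂ n, U n := Set.mem_iInter.mpr h2
      rw [← hUe] at this
      have hφz : φ z = (z.1, e) := Prod.ext (hπ z) this
      have : φ z = φ (z.1, z.1) := by rw [hdiag]; exact hφz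
      have := φ.injective this
      exact congrArg Prod.snd this |>.symm
end

section
/- Let G be a rectifiable space in which every point is a Gδ-point. Then every compact subset of G, with its diagonal being Gδ in the square of the subspace, is metrizable; in particular every compact subspace of a rectifiable space of countable pseudocharacter is metrizable. -/
/-!
In a rectifiable space the diagonal is the preimage of `{e}` under the continuous map
`(x, y) ↦ q x y`, so countable pseudocharacter makes the diagonal a Gδ-set, also in every subspace.
A compact Hausdorff space `K` with Gδ diagonal is metrizable: Urysohn's lemma gives
`f : C(K × K, ℝ)` with `f ⁻¹' {1}` equal to the diagonal, and then `x ↦ f (x, ·)` is a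
continuous injection, hence an embedding, of `K` into the metric space `C(K, ℝ)`.
-/

open Set Function TopologicalSpace

theorem metrizableSpace_of_isGδ_diagonal {X : Type*} [TopologicalSpace X] [CompactSpace X]
    [T2Space X] (h : IsGδ (diagonal X)) : MetrizableSpace X := by
  obtain ⟨f, hf, -⟩ := exists_continuous_one_zero_of_isCompact_of_isGδ
    isClosed_diagonal.isCompact h isClosed_empty (disjoint_empty _)
  have hf_diag (x y : X) : f (x, y) = 1 ↔ x = y := by
    rw [← mem_singleton_iff (a := f (x, y)), ← mem_preimage, ← hf, mem_diagonal_iff]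
  have hinj : Injective f.curry := fun x y hxy ↦
    (hf_diag x y).1 <| (DFunLike.congr_fun hxy y).trans ((hf_diag y y).2 rfl)
  exact (f.curry.continuous.isClosedEmbedding hinj).isEmbedding.metrizableSpace

theorem IsGδ.diagonal_subtype {X : Type*} [TopologicalSpace X] (h : IsGδ (diagonal X))
    (s : Set X) : IsGδ (diagonal s) := by
  have hs : diagonal s = Prod.map Subtype.val Subtype.val ⁻¹' diagonal X := by
    ext ⟨x, y⟩
    exact Subtype.ext_iff
  rw [hs]
  exact h.preimage (continuous_subtype_val.prodMap continuous_subtype_val)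

theorem diagonal_eq_preimage_singleton {X Y : Type*} {q : X → X → Y} {e : Y}
    (hqe : ∀ x, q x x = e) (hqinj : ∀ x y, q x y = e → x = y) :
    diagonal X = (fun z : X × X ↦ q z.1 z.2) ⁻¹' {e} := by
  ext ⟨x, y⟩
  refine ⟨?_, hqinj x y⟩
  rintro (rfl : x = y)
  exact hqe x

theorem isGδ_diagonal_of_isGδ_singleton {X Y : Type*} [TopologicalSpace X] [TopologicalSpace Y]
    {q : X → X → Y} (hq : Continuous fun z : X × X ↦ q z.1 z.2) {e : Y}
    (hqe : ∀ x, q x x = e) (hqinj : ∀ x y, q x y = e → x = y) (he : IsGδ {e}) :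
    IsGδ (diagonal X) := by
  rw [diagonal_eq_preimage_singleton hqe hqinj]
  exact he.preimage hq

theorem stmt_13_general {G : Type*} [TopologicalSpace G] [T2Space G]
    (q : G → G → G)
    (hq : Continuous fun z : G × G => q z.1 z.2)
    (e : G)
    (hqe : ∀ x : G, q x x = e)
    (hqinj : ∀ x y : G, q x y = e → x = y)
    (hpsi : ∀ x : G, ∃ U : ℕ → Set G, (∀ n, IsOpen (U n)) ∧ {x} = ⋂ n, U n) :
    ∀ K : Set G, IsCompact K → TopologicalSpace.MetrizableSpace K := by
  intro K hK
  have : CompactSpace K := isCompact_iff_compactSpace.mp hK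
  obtain ⟨U, hU_open, hU⟩ := hpsi e
  have he : IsGδ {e} := hU ▸ .iInter_of_isOpen hU_open
  exact metrizableSpace_of_isGδ_diagonal
    ((isGδ_diagonal_of_isGδ_singleton hq hqe hqinj he).diagonal_subtype K)

/-- Every compact subspace of a Hausdorff rectifiable space of
countable pseudocharacter is metrizable. -/
theorem stmt_13 {G : Type*} [TopologicalSpace G] [T2Space G]
    (p q : G → G → G)
    (hp : Continuous fun z : G × G => p z.1 z.2)
    (hq : Continuous fun z : G × G => q z.1 z.2)
    (e : G)
    (hpq : ∀ x y : G, p x (q x y) = y)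
    (hqp : ∀ x y : G, q x (p x y) = y)
    (hqe : ∀ x : G, q x x = e)
    (hqinj : ∀ x y : G, q x y = e → x = y)
    (hpsi : ∀ x : G, ∃ U : ℕ → Set G, (∀ n, IsOpen (U n)) ∧ {x} = ⋂ n, U n) :
    ∀ K : Set G, IsCompact K → TopologicalSpace.MetrizableSpace K :=
  stmt_13_general q hq e hqe hqinj hpsi
end

section
/- If the cardinal invariant 𝔟 (the least cardinality of an unbounded family in ω^ω under eventual domination) satisfies 𝔟 = ω₁, then the product space {0,1}^{ω₁} is not an α₄-space. -/
open Filter Topology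

/-- A family of functions `ℕ → ℕ` is unbounded if no single function eventually
dominates all of its members. -/
def IsUnboundedFamily (F : Set (ℕ → ℕ)) : Prop :=
  ¬ ∃ g : ℕ → ℕ, ∀ f ∈ F, ∀ᶠ n in atTop, f n < g n

/-- The cardinal characteristic 𝔟: the least cardinality of an unbounded family. -/
noncomputable def bFrak : Cardinal :=
  sInf {c : Cardinal | ∃ F : Set (ℕ → ℕ), IsUnboundedFamily F ∧ Cardinal.mk F = c}

/-- A space is an α₄-space if for each point `x` and each countable family of
sequences converging to `x` there is a sequence converging to `x` meeting
infinitely many of them. -/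
def IsAlpha4Space (X : Type*) [TopologicalSpace X] : Prop :=
  ∀ x : X, ∀ S : ℕ → ℕ → X, (∀ n, Tendsto (S n) atTop (𝓝 x)) →
    ∃ s : ℕ → X, Tendsto s atTop (𝓝 x) ∧ {n : ℕ | ∃ k m : ℕ, s k = S n m}.Infinite

/-- Running maximum of `f` on `{0, …, n}`. -/
def fhat (f : ℕ → ℕ) (n : ℕ) : ℕ := (Finset.range (n + 1)).sup f

lemma fhat_mono (f : ℕ → ℕ) : Monotone (fhat f) := fun a b h =>
  Finset.sup_mono (Finset.range_subset_range.mpr (by omega))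

lemma le_fhat (f : ℕ → ℕ) (n : ℕ) : f n ≤ fhat f n :=
  Finset.le_sup (Finset.self_mem_range_succ n)

/-- The test sequences in the product `I → Bool`. -/
def Sfun {F : Set (ℕ → ℕ)} {I : Type*} (e : (↥F ⊕ ℕ × ℕ) ≃ I)
    (n m : ℕ) (i : I) : Bool :=
  Sum.elim (fun f : ↥F => decide (m < fhat f.1 n))
    (fun p : ℕ × ℕ => decide (p = (n, m))) (e.symm i)

lemma aux {F : Set (ℕ → ℕ)} (hF : IsUnboundedFamily F) {I : Type*}
    (e : (↥F ⊕ ℕ × ℕ) ≃ I) : ¬ IsAlpha4Space (I → Bool) := by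
  intro hα
  classical
  have hconv : ∀ n, Tendsto (Sfun e n) atTop (𝓝 (fun _ : I => false)) := by
    intro n
    rw [tendsto_pi_nhds]
    intro i
    rw [show (𝓝 false) = pure false from congrFun (nhds_discrete Bool) false, tendsto_pure]
    cases h : e.symm i with
    | inl f =>
      filter_upwards [eventually_ge_atTop (fhat f.1 n)] with m hm
      simp only [Sfun, h, Sum.elim_inl, decide_eq_false_iff_not, not_lt]
      exact hm
    | inr p =>
      filter_upwards [eventually_ge_atTop (p.2 + 1)] with m hm
      simp only [Sfun, h, Sum.elim_inr, decide_eq_false_iff_not]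
      intro hp
      rw [hp] at hm
      omega
  obtain ⟨s, hs, hA⟩ := hα (fun _ => false) (Sfun e) hconv
  set A : Set ℕ := {n : ℕ | ∃ k m : ℕ, s k = Sfun e n m} with hAdef
  -- choice of witnesses
  let K : ℕ → ℕ := fun n => if h : ∃ k m : ℕ, s k = Sfun e n m then h.choose else 0
  let M : ℕ → ℕ := fun n =>
    if h : ∃ k m : ℕ, s k = Sfun e n m then h.choose_spec.choose else 0
  have hKM : ∀ n, (∃ k m : ℕ, s k = Sfun e n m) → s (K n) = Sfun e n (M n) := by
    intro n h
    simp only [K, M, dif_pos h]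
    exact h.choose_spec.choose_spec
  -- injectivity of (n, m) ↦ Sfun e n m in n
  have hSinj : ∀ n m n' m', Sfun e n m = Sfun e n' m' → n = n' := by
    intro n m n' m' h
    have h2 := congrFun h (e (Sum.inr (n, m)))
    simp only [Sfun, Equiv.symm_apply_apply, Sum.elim_inr, decide_eq_decide] at h2
    have h3 : (n, m) = (n', m') := h2.mp trivial
    exact (Prod.ext_iff.mp h3).1
  have hKinj : ∀ n ∈ A, ∀ n' ∈ A, K n = K n' → n = n' := by
    intro n hn n' hn' h
    have h1 := hKM n hn
    have h2 := hKM n' hn'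
    rw [h] at h1
    exact hSinj n (M n) n' (M n') (h1.symm.trans h2)
  -- selection of elements of A above each n
  have ha : ∀ n : ℕ, ∃ m ∈ A, n < m := fun n => hA.exists_gt n
  let a : ℕ → ℕ := fun n => (ha n).choose
  have haA : ∀ n, a n ∈ A := fun n => (ha n).choose_spec.1
  have hage : ∀ n, n ≤ a n := fun n => le_of_lt (ha n).choose_spec.2
  -- the dominating function, contradicting unboundedness
  apply hF
  refine ⟨fun n => M (a n) + 1, ?_⟩
  intro f hfF
  have hcoord := tendsto_pi_nhds.mp hs (e (Sum.inl ⟨f, hfF⟩))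
  rw [show (𝓝 false) = pure false from congrFun (nhds_discrete Bool) false,
    tendsto_pure, eventually_atTop] at hcoord
  obtain ⟨Kf, hKf⟩ := hcoord
  have hfin : {n | n ∈ A ∧ K n < Kf}.Finite := by
    apply Set.Finite.of_finite_image (f := K)
    · exact (Set.finite_Iio Kf).subset (by rintro _ ⟨n, ⟨_, hn⟩, rfl⟩; exact hn)
    · intro n hn n' hn' h
      exact hKinj n hn.1 n' hn'.1 h
  obtain ⟨N, hN⟩ := hfin.bddAbove
  filter_upwards [eventually_ge_atTop (N + 1)] with n hn
  have h1 : a n ∈ A := haA n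
  have h2 : Kf ≤ K (a n) := by
    by_contra hlt
    have : a n ≤ N := hN ⟨h1, not_le.mp hlt⟩
    have := hage n
    omega
  have h3 := hKf (K (a n)) h2
  rw [hKM (a n) h1] at h3
  simp only [Sfun, Equiv.symm_apply_apply, Sum.elim_inl, decide_eq_false_iff_not,
    not_lt] at h3
  have h5 : f n ≤ fhat f (a n) := le_trans (le_fhat f n) (fhat_mono f (hage n))
  omega

/-- If 𝔟 = ω₁, then the product `D^{ω₁}` of ω₁ copies of the
two-point discrete space is not an α₄-space. -/
theorem stmt_17 (hb : bFrak = Cardinal.aleph 1) :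
    ¬ IsAlpha4Space ((Cardinal.aleph 1).out → Bool) := by
  have hne : {c : Cardinal | ∃ F : Set (ℕ → ℕ), IsUnboundedFamily F ∧ Cardinal.mk F = c}.Nonempty := by
    refine ⟨_, Set.univ, ?_, rfl⟩
    rintro ⟨g, hg⟩
    obtain ⟨n, hn⟩ := (hg g (Set.mem_univ g)).exists
    omega
  have hmem : bFrak ∈ {c : Cardinal | ∃ F : Set (ℕ → ℕ), IsUnboundedFamily F ∧ Cardinal.mk F = c} :=
    csInf_mem hne
  obtain ⟨F, hF, hFcard⟩ := hmem
  rw [hb] at hFcard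
  have hsum : Cardinal.mk (↥F ⊕ ℕ × ℕ) = Cardinal.aleph 1 := by
    rw [Cardinal.mk_sum]
    simp only [Cardinal.lift_id, hFcard, Cardinal.mk_prod, Cardinal.mk_nat,
      Cardinal.lift_aleph0, Cardinal.aleph0_mul_aleph0]
    exact Cardinal.add_eq_left (by simp [Cardinal.aleph0_le_aleph])
      (by simp [Cardinal.aleph0_le_aleph])
  have hcard : Cardinal.mk (ULift.{u_1} (↥F ⊕ ℕ × ℕ)) = Cardinal.mk (Cardinal.aleph 1).out := by
    rw [Cardinal.mk_uLift, Cardinal.mk_out, hsum, Cardinal.lift_aleph]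
    norm_num
  obtain ⟨e⟩ := Cardinal.eq.mp hcard
  exact aux hF ((Equiv.ulift.{u_1, 0}).symm.trans e)
end
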